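/- arXiv:2011.02735 — 4 statements merged into one kernel-verified Lean document; each statement's English description precedes it below -/
import Mathlib

section
/- Let G be a group generated by a finite set A acting on a set X, and let Γ be the Schreier graph of this action. For every finite rooted A-labelled graph (Δ, x₀) there exist a finite colour set B, a tileset Θ ⊆ B × A × B and a subset C ⊆ B such that: (1) every valid Θ-tiling τ of Γ satisfies τ(v) ∈ C for every vertex v of Γ admitting a label-preserving graph morphism (Δ, x₀) → (Γ, v); and (2) there exists a valid Θ-tiling τ of Γ such that τ(v) ∈ C holds exactly for those vertices v admitting such a morphism. -/
/-!
A morphism `(Δ, x₀) → (Γ, v)` is determined on the component of `x₀` by `v`: a vertex `u` reached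
by a walk with label `g` must go to `g • v`. Fixing one walk for each vertex, such a morphism exists
iff `v` is fixed by the finitely many relators `g_{head e}⁻¹ * lab e * g_{tail e}`, so it suffices
to mark the fixed points of a single element `s` and to intersect finitely many markings.

To mark `Fix(s)`, write `s` as a word in `A ∪ A⁻¹`; one layer of colours per letter carries a
colour along the word, so that a valid tiling can compare the colour at `x` with the colour at
`s • x`. Forbidding equal colours outside a special colour forces that colour at fixed points,
and a proper 3-colouring of every nontrivial `⟨s⟩`-orbit (a cycle or a bi-infinite path) gives a
tiling using it exactly there.
-/

/-- An `A`-labelled graph: a type of vertices, a type of edges, and tail/head/label maps. -/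
structure LabGraph (A : Type) where
  V : Type
  E : Type
  tail : E → V
  head : E → V
  lab : E → A

/-- `τ` is a valid `Θ`-tiling of the Schreier graph of the action of `G` on `X` with respect
to the generating set `A`. -/
def SchreierValid {G X B : Type} [Group G] [MulAction G X]
    (A : Finset G) (Θ : Set (B × G × B)) (τ : X → B) : Prop :=
  ∀ x : X, ∀ a ∈ A, (τ x, a, τ (a • x)) ∈ Θ

/-- There is a label-preserving graph morphism from the finite rooted labelled graph
`(Δ, x₀)` to the Schreier graph of the action, rooted at `v`: a vertex map sending the root
to `v` and each edge of `Δ` with label `a` to the `a`-labelled edge of the Schreier graph at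
the image of its tail. -/
def MorphismAt {G X : Type} [Group G] [MulAction G X]
    (Δ : LabGraph G) (x₀ : Δ.V) (v : X) : Prop :=
  ∃ h : Δ.V → X, h x₀ = v ∧ ∀ e : Δ.E, h (Δ.head e) = Δ.lab e • h (Δ.tail e)

open MulAction Subgroup Function

/-- A proper 3-colouring of the cycle `ZMod n` (of the path `ℤ` when `n = 0`); there is none for
`n = 1`, where `k + 1 = k`. -/
def ZMod.cycleColoring : (n : ℕ) → ZMod n → Fin 3
  | 0 => fun k : ℤ => if k % 2 = 0 then 0 else 1
  | 1 => fun _ => 0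
  | n + 2 => SimpleGraph.cycleGraph.tricoloring (n + 2) (by omega)

theorem ZMod.cycleColoring_add_one_ne {n : ℕ} (hn : n ≠ 1) (k : ZMod n) :
    cycleColoring n (k + 1) ≠ cycleColoring n k := by
  match n, hn, k with
  | 0, _, (k : ℤ) =>
    change (if (k + 1) % 2 = 0 then (0 : Fin 3) else 1) ≠ (if k % 2 = 0 then 0 else 1)
    split_ifs <;> omega
  | n + 2, _, k =>
    exact (SimpleGraph.cycleGraph.tricoloring (n + 2) (by omega)).valid
      (Or.inl (add_sub_cancel_left k 1))

section Coloring

variable {G X : Type} [Group G] [MulAction G X]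

theorem MulAction.zpow_smul_eq_zpow_smul_iff {s : G} {b : X} {i j : ℤ} :
    s ^ i • b = s ^ j • b ↔ (i : ZMod (minimalPeriod (s • ·) b)) = j := by
  rw [ZMod.intCast_eq_intCast_iff_dvd_sub, ← zpow_smul_eq_iff_minimalPeriod_dvd, sub_eq_neg_add,
    zpow_add, mul_smul, zpow_neg, inv_smul_eq_iff, eq_comm]

/-- Each `⟨s⟩`-orbit is a copy of `ZMod n` based at a chosen representative, with `s` acting as
`+ 1`; colour it by `ZMod.cycleColoring n`. -/
theorem exists_coloring_smul_ne (s : G) :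
    ∃ c : X → Fin 3, ∀ y : X, s • y ≠ y → c (s • y) ≠ c y := by
  let r : X → X := fun y => (Quotient.mk (orbitRel (zpowers s) X) y).out
  have hr : ∀ y, r (s • y) = r y := fun y =>
    congrArg Quotient.out (Quotient.sound ⟨⟨s, mem_zpowers s⟩, rfl⟩)
  have hk : ∀ y, ∃ k : ℤ, s ^ k • r y = y := fun y => by
    obtain ⟨⟨g, k, rfl⟩, hg⟩ := Quotient.mk_out (s := orbitRel (zpowers s) X) y
    have hg : s ^ k • y = r y := hg
    exact ⟨-k, by rw [← hg, zpow_neg, inv_smul_smul]⟩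
  choose k hk using hk
  refine ⟨fun y => ZMod.cycleColoring _ (k y : ZMod (minimalPeriod (s • ·) (r y))),
    fun y hy => ?_⟩
  have hsy : s ^ (k y + 1) • r y = s • y := by rw [add_comm, zpow_add, zpow_one, mul_smul, hk]
  have hn : minimalPeriod (s • ·) (r y) ≠ 1 := fun h1 => by
    have : s ^ (k y + 1) • r y = s ^ k y • r y := by
      rw [zpow_smul_eq_zpow_smul_iff, h1]
      exact Subsingleton.elim _ _
    exact hy (by rw [← hsy, this, hk])
  have hcast : (k (s • y) : ZMod (minimalPeriod (s • ·) (r y))) = k y + 1 := by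
    rw [← Int.cast_one, ← Int.cast_add, ← zpow_smul_eq_zpow_smul_iff, hsy, ← hr, hk]
  dsimp only
  rw [hr, hcast]
  exact ZMod.cycleColoring_add_one_ne hn _

end Coloring

section Tilings

variable {G : Type} [Group G] (A : Finset G) {X : Type} [MulAction G X]

def Markable (P : X → Prop) : Prop :=
  ∃ (B : Type) (_ : Fintype B) (Θ : Set (B × G × B)) (C : Set B),
    (∀ τ : X → B, SchreierValid A Θ τ → ∀ v : X, P v → τ v ∈ C) ∧
    (∃ τ : X → B, SchreierValid A Θ τ ∧ ∀ v : X, (τ v ∈ C ↔ P v))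

theorem markable_const (p : Prop) : Markable A (fun _ : X => p) :=
  ⟨PUnit, inferInstance, Set.univ, {_b | p}, fun _ _ _ hp => hp,
    ⟨fun _ => PUnit.unit, fun _ _ _ => trivial, fun _ => Iff.rfl⟩⟩

theorem Markable.forall {ι : Type} [Finite ι] {P : ι → X → Prop}
    (hP : ∀ i, Markable A (P i)) : Markable A (fun v => ∀ i, P i v) := by
  classical
  have := Fintype.ofFinite ι
  choose B _ Θ C hC τ hτ hτC using hP
  refine ⟨∀ i, B i, inferInstance, {t | ∀ i, (t.1 i, t.2.1, t.2.2 i) ∈ Θ i}, {b | ∀ i, b i ∈ C i},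
    fun τ' hτ' v hv i => hC i (τ' · i) (fun x a ha => hτ' x a ha i) v (hv i),
    fun x i => τ i x, fun x a ha i => hτ i x a ha, fun v => forall_congr' fun i => hτC i v⟩

variable (X) in
def Transportable (Col : Type) (s : G) : Prop :=
  ∃ (B : Type) (_ : Fintype B) (Θ : Set (B × G × B)) (π₀ π₁ : B → Col),
    (∀ τ : X → B, SchreierValid A Θ τ → ∀ x : X, π₀ (τ (s • x)) = π₁ (τ x)) ∧
    ∀ m : X → Col, ∃ τ : X → B, SchreierValid A Θ τ ∧ π₁ ∘ τ = m

variable {A} {Col : Type} [Fintype Col]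

theorem transportable_one : Transportable A X Col 1 :=
  ⟨Col, inferInstance, Set.univ, id, id, fun τ _ x => by rw [one_smul],
    fun m => ⟨m, fun _ _ _ => trivial, rfl⟩⟩

/-- The new layer records, at `g • y`, the `π₀`-colour of `y`. -/
theorem Transportable.mul_left {t g : G} (ht : Transportable A X Col t)
    (hg : g ∈ A ∨ g⁻¹ ∈ A) : Transportable A X Col (g * t) := by
  obtain ⟨B, _, Θ, π₀, π₁, hvalid, hlift⟩ := ht
  refine ⟨B × Col, inferInstance,
    {t | (t.1.1, t.2.1, t.2.2.1) ∈ Θ ∧ (t.2.1 = g → t.2.2.2 = π₀ t.1.1) ∧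
      (t.2.1 = g⁻¹ → t.1.2 = π₀ t.2.2.1)}, Prod.snd, π₁ ∘ Prod.fst, fun τ hτ x => ?_, fun m => ?_⟩
  · have hstep : (τ (g • t • x)).2 = π₀ (τ (t • x)).1 := by
      rcases hg with hg | hg
      · exact (hτ _ g hg).2.1 rfl
      · simpa using (hτ (g • t • x) g⁻¹ hg).2.2 rfl
    rw [mul_smul, hstep]
    exact hvalid (Prod.fst ∘ τ) (fun x a ha => (hτ x a ha).1) x
  · obtain ⟨τ, hτ, rfl⟩ := hlift m
    refine ⟨fun x => (τ x, π₀ (τ (g⁻¹ • x))), fun x a ha => ⟨hτ x a ha, ?_, ?_⟩, rfl⟩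
    · dsimp only
      rintro rfl
      rw [inv_smul_smul]
    · dsimp only
      rintro rfl
      rfl

theorem transportable_of_closure_eq_top (hA : closure (A : Set G) = ⊤) (s : G) :
    Transportable A X Col s := by
  induction hA ▸ mem_top s using closure_induction_left with
  | one => exact transportable_one
  | mul_left a ha t _ ht => exact ht.mul_left (Or.inl ha)
  | inv_mul_cancel a ha t _ ht => exact ht.mul_left (Or.inr (by simpa using ha))

theorem markable_smul_eq_self (hA : closure (A : Set G) = ⊤) (s : G) :
    Markable A (fun v : X => s • v = v) := by
  classical
  rcases A.eq_empty_or_nonempty with rfl | ⟨a, ha⟩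
  · -- with no generators the tiles constrain nothing, but then `G` is trivial
    have hs : s = 1 := by simpa [← hA] using mem_top s
    simpa [hs] using markable_const ∅ True
  obtain ⟨B, _, Θ, π₀, π₁, hvalid, hlift⟩ :=
    transportable_of_closure_eq_top (X := X) (Col := Option (Fin 3)) hA s
  refine ⟨B, inferInstance, {t ∈ Θ | π₀ t.1 = π₁ t.1 → π₁ t.1 = none}, {b | π₁ b = none},
    fun τ hτ v hv => (hτ v a ha).2 ?_, ?_⟩
  · simpa [hv] using hvalid τ (fun x a ha => (hτ x a ha).1) v
  obtain ⟨c, hc⟩ := exists_coloring_smul_ne (X := X) s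
  let m : X → Option (Fin 3) := fun y => if s • y = y then none else some (c y)
  have hm : ∀ y, m y = m (s • y) → m (s • y) = none := fun y => by
    by_cases hy : s • y = y
    · simp [m, hy]
    · simpa [m, hy, smul_left_cancel_iff] using (hc y hy).symm
  obtain ⟨τ, hτ, hτm⟩ := hlift m
  have hπ₁ : ∀ x, π₁ (τ x) = m x := congrFun hτm
  have hπ₀ : ∀ x, π₀ (τ x) = m (s⁻¹ • x) := fun x => by
    rw [← hπ₁, ← hvalid τ hτ, smul_inv_smul]
  refine ⟨τ, fun x b hb => ⟨hτ x b hb, fun h => ?_⟩, fun v => ?_⟩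
  · change π₀ (τ x) = π₁ (τ x) at h
    change π₁ (τ x) = none
    rw [hπ₀, hπ₁] at h
    rw [hπ₁]
    simpa using hm (s⁻¹ • x) (by simpa using h)
  · change π₁ (τ v) = none ↔ s • v = v
    simp [hπ₁, m]

end Tilings

namespace LabGraph

variable {G : Type} [Group G] (Δ : LabGraph G) (x₀ : Δ.V)

inductive WalkLabel : Δ.V → G → Prop
  | nil : WalkLabel x₀ 1
  | forward (e : Δ.E) {g : G} : WalkLabel (Δ.tail e) g → WalkLabel (Δ.head e) (Δ.lab e * g)
  | backward (e : Δ.E) {g : G} :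
      WalkLabel (Δ.head e) g → WalkLabel (Δ.tail e) ((Δ.lab e)⁻¹ * g)

def Reachable (u : Δ.V) : Prop :=
  ∃ g, Δ.WalkLabel x₀ u g

theorem reachable_head_iff (e : Δ.E) :
    Δ.Reachable x₀ (Δ.head e) ↔ Δ.Reachable x₀ (Δ.tail e) :=
  ⟨fun ⟨_, hg⟩ => ⟨_, hg.backward e⟩, fun ⟨_, hg⟩ => ⟨_, hg.forward e⟩⟩

open Classical in
noncomputable def potential (u : Δ.V) : G :=
  if h : u ≠ x₀ ∧ Δ.Reachable x₀ u then h.2.choose else 1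

theorem potential_root : Δ.potential x₀ x₀ = 1 :=
  dif_neg fun h => h.1 rfl

theorem walkLabel_potential {u : Δ.V} (hu : Δ.Reachable x₀ u) :
    Δ.WalkLabel x₀ u (Δ.potential x₀ u) := by
  by_cases hux : u = x₀
  · subst hux
    rw [potential_root]
    exact .nil
  · rw [potential, dif_pos ⟨hux, hu⟩]
    exact hu.choose_spec

noncomputable def relator (e : Δ.E) : G :=
  (Δ.potential x₀ (Δ.head e))⁻¹ * Δ.lab e * Δ.potential x₀ (Δ.tail e)

variable {Δ x₀} {X : Type} [MulAction G X]

theorem WalkLabel.apply_eq_smul {h : Δ.V → X} (hh : ∀ e, h (Δ.head e) = Δ.lab e • h (Δ.tail e))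
    {u : Δ.V} {g : G} (hw : Δ.WalkLabel x₀ u g) : h u = g • h x₀ := by
  induction hw with
  | nil => rw [one_smul]
  | forward e _ ih => rw [hh, ih, mul_smul]
  | backward e _ ih => rw [mul_smul, ← ih, hh, inv_smul_smul]

/-- Once some morphism `(Δ, x₀) → Γ` exists, it can be kept on the components not containing
`x₀`; on the component of `x₀` it is forced to be `u ↦ potential u • v`. -/
theorem morphismAt_iff {v₀ v : X} (h₀ : MorphismAt Δ x₀ v₀) :
    MorphismAt Δ x₀ v ↔
      ∀ e : {e : Δ.E // Δ.Reachable x₀ (Δ.tail e)}, Δ.relator x₀ e • v = v := by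
  classical
  constructor
  · rintro ⟨h, rfl, hh⟩ ⟨e, he⟩
    have htail := (walkLabel_potential Δ x₀ he).apply_eq_smul hh
    have hhead := (walkLabel_potential Δ x₀ ((reachable_head_iff Δ x₀ e).2 he)).apply_eq_smul hh
    rw [relator, mul_smul, mul_smul, ← htail, ← hh, hhead, inv_smul_smul]
  · obtain ⟨h₀, -, hh₀⟩ := h₀
    intro hv
    refine ⟨fun u => if Δ.Reachable x₀ u then Δ.potential x₀ u • v else h₀ u, ?_, fun e => ?_⟩
    · dsimp only
      rw [if_pos ⟨1, .nil⟩, potential_root, one_smul]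
    by_cases he : Δ.Reachable x₀ (Δ.tail e)
    · have hrel := hv ⟨e, he⟩
      rw [relator, mul_smul, mul_smul, inv_smul_eq_iff] at hrel
      simp only [if_pos he, if_pos ((reachable_head_iff Δ x₀ e).2 he), hrel]
    · simp only [if_neg he, if_neg (mt (reachable_head_iff Δ x₀ e).1 he), hh₀]

end LabGraph

theorem localmark_general
    {G X : Type} [Group G] [MulAction G X]
    (A : Finset G) (hA : Subgroup.closure (A : Set G) = ⊤)
    (Δ : LabGraph G) (hEfin : Finite Δ.E) (x₀ : Δ.V) :
    ∃ (B : Type) (_ : Fintype B) (Θ : Set (B × G × B)) (C : Set B),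
      (∀ τ : X → B, SchreierValid A Θ τ →
        ∀ v : X, MorphismAt Δ x₀ v → τ v ∈ C) ∧
      (∃ τ : X → B, SchreierValid A Θ τ ∧
        ∀ v : X, (τ v ∈ C ↔ MorphismAt Δ x₀ v)) := by
  change Markable A (MorphismAt Δ x₀)
  by_cases hex : ∃ v₀ : X, MorphismAt Δ x₀ v₀
  · obtain ⟨v₀, h₀⟩ := hex
    have hrel : MorphismAt Δ x₀ = fun v : X =>
        ∀ e : {e : Δ.E // Δ.Reachable x₀ (Δ.tail e)}, Δ.relator x₀ e • v = v :=
      funext fun v => propext (LabGraph.morphismAt_iff h₀)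
    rw [hrel]
    exact Markable.forall A fun e => markable_smul_eq_self hA _
  · have hnone : MorphismAt Δ x₀ = fun _ : X => False :=
      funext fun v => eq_false fun hv => hex ⟨v, hv⟩
    rw [hnone]
    exact markable_const A False

/-- **Local configurations may be marked by a tileset** (Lemma 2.3).  Let `Γ` be the
Schreier graph of a group `G` generated by a finite set `A` acting on `X`.  For every
finite rooted `A`-labelled graph `(Δ, x₀)` there are a finite colour set `B`, a tileset
`Θ ⊆ B × A × B` and a subset `C ⊆ B` such that (1) in every valid `Θ`-tiling, all vertices
`v` admitting a morphism `(Δ, x₀) → (Γ, v)` are coloured in `C`, and (2) some valid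
`Θ`-tiling colours in `C` exactly those vertices. -/
theorem localmark
    {G X : Type} [Group G] [MulAction G X]
    (A : Finset G) (hA : Subgroup.closure (A : Set G) = ⊤)
    (Δ : LabGraph G) (hVfin : Finite Δ.V) (hEfin : Finite Δ.E)
    (hlab : ∀ e : Δ.E, Δ.lab e ∈ A) (x₀ : Δ.V) :
    ∃ (B : Type) (_ : Fintype B) (Θ : Set (B × G × B)) (C : Set B),
      (∀ τ : X → B, SchreierValid A Θ τ →
        ∀ v : X, MorphismAt Δ x₀ v → τ v ∈ C) ∧
      (∃ τ : X → B, SchreierValid A Θ τ ∧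
        ∀ v : X, (τ v ∈ C ↔ MorphismAt Δ x₀ v)) :=
  localmark_general A hA Δ hEfin x₀
end

section
/- Let G be a finitely generated post-critically finite (bounded) self-similar group with alphabet S and nucleus N, let ξ ∈ S^ℕ, and let Γ be the Schreier graph of the orbit G·ξ with respect to N, viewed as an undirected graph. Then Γ has finite treewidth: there exists a tree decomposition of Γ all of whose bags are finite of uniformly bounded size. -/
/-!
Every element of the minimal nucleus `N` has a predecessor in `N` (the states having one already
form a contracting set), so the states of any `h ∈ N` prolong to left-infinite paths in `N`. Hence
if `h ∈ N` moves the tail of `η` after position `n`, its state there is nontrivial and the first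
`n` letters of `η`, reversed, begin a post-critical sequence: such `η` have at most `|P|` prefixes
of length `n`, where `P` is the finite post-critical set. Minimality also makes `N` closed under
inverses, so the condition is symmetric along the edges `η — hη`.

The decomposition tree has a node `(n, ζ)` for each position and tail, `(n, ζ)` being a child of
`(n + 1, drop 1 ζ)`, plus a root joined to one node of each component of this forest. The bag at
`(n, ζ)` consists of the sequences with tail `ζ` after `n` whose tails are moved at every earlier
position (at most `|P| |S|` of them), together with the sequences moved at every position (finitely
many, by the prefix bound), which also form the root bag. The bags containing `η` are then a path
upwards from `(0, η)`, or everything; and an edge `η — hη` lies in the bag at the first position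
after which the tails of `η` and `hη` agree, or in the root bag if there is none.
-/

namespace SSG

variable {G : Type} [Group G] {S : Type} [Fintype S]

/-- The state reached by `g` after reading the first `n` letters of `ξ`. -/
def ssState (Φ : G → S → S × G) (g : G) (ξ : ℕ → S) : ℕ → G
  | 0 => g
  | n + 1 => (Φ (ssState Φ g ξ n) (ξ n)).2

/-- The action of `g` on the infinite word `ξ` determined by the self-similarity data `Φ`. -/
def ssAct (Φ : G → S → S × G) (g : G) (ξ : ℕ → S) : ℕ → S :=
  fun n => (Φ (ssState Φ g ξ n) (ξ n)).1

/-- The state reached by `g` after reading the finite word `v`. -/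
def ssStateWord (Φ : G → S → S × G) : G → List S → G
  | g, [] => g
  | g, s :: v => ssStateWord Φ (Φ g s).2 v

/-- `N` absorbs all states reached by sufficiently long words (contraction property). -/
def Contracting (Φ : G → S → S × G) (N : Finset G) : Prop :=
  ∀ g : G, ∃ n : ℕ, ∀ v : List S, n ≤ v.length → ssStateWord Φ g v ∈ N

/-- The post-critical set: inputs read along left-infinite paths in the nucleus ending at a
non-identity state. -/
def postCritical (Φ : G → S → S × G) (N : Finset G) : Set (ℕ → S) :=
  {s | ∃ g : ℕ → G, (∀ k, g k ∈ N) ∧ g 0 ≠ 1 ∧ ∀ k, (Φ (g (k + 1)) (s k)).2 = g k}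

/-- The orbit of `ξ` under the group action. -/
def orbitSet (Φ : G → S → S × G) (ξ : ℕ → S) : Set (ℕ → S) :=
  {η | ∃ g : G, ssAct Φ g ξ = η}

/-- The Schreier graph of the orbit of `ξ` with respect to `N`, viewed as an undirected
simple graph: `η` and `η'` are adjacent iff they are distinct and some `g ∈ N` maps one to
the other. -/
def schreierGraph (Φ : G → S → S × G) (N : Finset G) (ξ : ℕ → S) :
    SimpleGraph {η : ℕ → S // η ∈ orbitSet Φ ξ} :=
  SimpleGraph.fromRel fun η η' => ∃ g ∈ N, ssAct Φ g η.1 = η'.1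

end SSG

open Filter in
theorem Set.finite_of_forall_prefix_mem_range {ι α : Type*} [Finite ι] {X : Set (ℕ → α)}
    (f : ∀ n, ι → Fin n → α) (hX : ∀ n, ∀ η ∈ X, (fun k : Fin n => η k) ∈ Set.range (f n)) :
    X.Finite := by
  by_contra hinf
  obtain ⟨Y, hYX, hY⟩ := Set.Infinite.exists_subset_card_eq hinf (Nat.card ι + 1)
  have hsep : ∀ᶠ n in atTop, ∀ a ∈ Y, ∀ b ∈ Y,
      (fun k : Fin n => a k) = (fun k : Fin n => b k) → a = b := by
    simp only [eventually_all_finset]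
    intro a _ b _
    by_cases hab : a = b
    · exact .of_forall fun _ _ => hab
    obtain ⟨k, hk⟩ := Function.ne_iff.mp hab
    filter_upwards [eventually_gt_atTop k] with n hn heq
    exact absurd (congrFun heq (⟨k, hn⟩ : Fin n)) hk
  obtain ⟨n, hn⟩ := hsep.exists
  choose i hi using fun a : Y => hX n a (hYX a.2)
  have hinj : Function.Injective i := fun a b hab =>
    Subtype.ext (hn a a.2 b b.2 (by rw [← hi, ← hi, hab]))
  have := Nat.card_le_card_of_injective i hinj
  rw [Nat.card_eq_fintype_card, Fintype.card_coe, hY] at this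
  omega

namespace SimpleGraph

variable {V : Type*} {G : SimpleGraph V}

lemma connected_induce_image_Iic (c : ℕ → V) (hc : ∀ n, G.Adj (c n) (c (n + 1))) (M : ℕ) :
    (G.induce (c '' Set.Iic M)).Connected := by
  induction M with
  | zero =>
    rw [show Set.Iic 0 = {0} by ext; simp, Set.image_singleton, induce_singleton_eq_top]
    exact connected_top
  | succ M ih =>
    have hunion : c '' Set.Iic (M + 1) = c '' Set.Iic M ∪ {c M, c (M + 1)} := by
      ext v
      simp only [Set.mem_image, Set.mem_Iic, Set.mem_union, Set.mem_insert_iff,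
        Set.mem_singleton_iff]
      constructor
      · rintro ⟨n, hn, rfl⟩
        rcases Nat.le_succ_iff.mp hn with hn | rfl
        exacts [Or.inl ⟨n, hn, rfl⟩, Or.inr (Or.inr rfl)]
      · rintro (⟨n, hn, rfl⟩ | rfl | rfl)
        exacts [⟨n, by omega, rfl⟩, ⟨M, by omega, rfl⟩, ⟨M + 1, le_rfl, rfl⟩]
    rw [hunion]
    exact induce_union_connected ih.preconnected
      (induce_pair_connected_of_adj (hc M)).preconnected
      ⟨c M, ⟨M, Set.mem_Iic.mpr le_rfl, rfl⟩, by simp⟩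

lemma Walk.IsCycle.exists_walk_between_neighbors {u : V} {c : G.Walk u u} (hc : c.IsCycle) :
    ∃ x y, G.Adj u x ∧ G.Adj y u ∧ x ≠ y ∧
      ∃ q : G.Walk x y, u ∉ q.support ∧ q.support ⊆ c.support := by
  cases c with
  | nil => exact absurd Walk.Nil.nil hc.not_nil
  | cons h p =>
    have hp : ¬ p.Nil := fun hp => by
      have := hc.three_le_length
      rw [length_cons, length_eq_zero_iff.mpr hp] at this
      omega
    have hne := hc.snd_ne_penultimate
    rw [snd_cons, penultimate_cons_of_not_nil _ _ hp] at hne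
    refine ⟨_, _, h, adj_penultimate hp, hne, p.dropLast, fun hu => ?_, ?_⟩
    · have hnd := ((cons_isCycle_iff p h).mp hc).1.support_nodup
      rw [← support_dropLast_concat hp] at hnd
      exact List.disjoint_of_nodup_append hnd hu (List.mem_singleton_self u)
    · rw [support_dropLast hp, support_cons]
      exact fun w hw => List.mem_cons_of_mem _ (List.dropLast_subset _ hw)

section ConeGraph

open Function

variable {V : Type*} (up : V → V)

def mergeSetoid : Setoid V where
  r p q := ∃ a b, up^[a] p = up^[b] q
  iseqv :=
    { refl := fun _ => ⟨0, 0, rfl⟩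
      symm := fun ⟨a, b, h⟩ => ⟨b, a, h.symm⟩
      trans := fun {p q r} ⟨a, b, h⟩ ⟨c, d, h'⟩ => ⟨c + a, b + d, by
        rw [iterate_add_apply, h, ← iterate_add_apply, add_comm, iterate_add_apply, h',
          ← iterate_add_apply]⟩ }

def coneGraph : SimpleGraph (Option V) := SimpleGraph.fromRel fun
  | some p, some q => up p = q
  | none, some q => (Quotient.mk (mergeSetoid up) q).out = q
  | _, _ => False

variable {up}

lemma coneGraph_adj_some_some {p q : V} :
    (coneGraph up).Adj (some p) (some q) ↔ p ≠ q ∧ (up p = q ∨ up q = p) := by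
  simp [coneGraph]

lemma coneGraph_adj_none_some {q : V} :
    (coneGraph up).Adj none (some q) ↔ (Quotient.mk (mergeSetoid up) q).out = q := by
  simp [coneGraph]

lemma mk_eq_of_walk {u w : Option V} (q : (coneGraph up).Walk u w) (hq : none ∉ q.support) :
    u.map (Quotient.mk (mergeSetoid up)) = w.map (Quotient.mk (mergeSetoid up)) := by
  induction q with
  | nil => rfl
  | @cons u v w h q ih =>
    rw [Walk.support_cons, List.mem_cons, not_or] at hq
    rw [← ih hq.2]
    match u, v, h with
    | some p, some p', h =>
      obtain ⟨-, h | h⟩ := coneGraph_adj_some_some.mp h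
      · exact congrArg some (Quotient.sound ⟨1, 0, h⟩)
      · exact congrArg some (Quotient.sound ⟨0, 1, h.symm⟩)
    | none, _, _ => exact absurd rfl hq.1
    | some _, none, _ => exact absurd q.start_mem_support hq.2

variable {lev : V → ℕ} (hlev : ∀ v, lev (up v) = lev v + 1)
include hlev

lemma coneGraph_adj_up (p : V) : (coneGraph up).Adj (some p) (some (up p)) :=
  coneGraph_adj_some_some.mpr ⟨fun h => by have := hlev p; rw [← h] at this; omega, Or.inl rfl⟩

lemma coneGraph_reachable_iterate (p : V) (a : ℕ) :
    (coneGraph up).Reachable (some p) (some (up^[a] p)) := by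
  induction a with
  | zero => rfl
  | succ a ih =>
    rw [iterate_succ_apply']
    exact ih.trans (coneGraph_adj_up hlev _).reachable

lemma coneGraph_reachable_none (p : V) : (coneGraph up).Reachable (some p) none := by
  obtain ⟨a, b, h⟩ := Quotient.mk_out (s := mergeSetoid up) p
  refine (coneGraph_reachable_iterate hlev p b).trans ?_
  rw [← h]
  exact (coneGraph_reachable_iterate hlev _ a).symm.trans
    (coneGraph_adj_none_some.mpr (by rw [Quotient.out_eq])).symm.reachable

lemma coneGraph_connected : (coneGraph up).Connected := by
  have h : ∀ t, (coneGraph up).Reachable t none := fun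
    | none => .rfl
    | some p => coneGraph_reachable_none hlev p
  exact ⟨fun t t' => (h t).trans (h t').symm⟩

lemma eq_up_of_coneGraph_adj {p q : V} (h : (coneGraph up).Adj (some p) (some q))
    (hle : lev p ≤ lev q) : q = up p := by
  obtain ⟨-, h | h⟩ := coneGraph_adj_some_some.mp h
  · exact h.symm
  · have := hlev q; rw [h] at this; omega

lemma coneGraph_isAcyclic : (coneGraph up).IsAcyclic := by
  classical
  intro v c hc
  by_cases hn : none ∈ c.support
  · obtain ⟨x, y, hx, hy, hxy, q, hq, -⟩ := (hc.rotate hn).exists_walk_between_neighbors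
    match x, y, hx, hy with
    | some r, some r', hx, hy =>
      rw [coneGraph_adj_none_some] at hx
      rw [adj_comm, coneGraph_adj_none_some] at hy
      have := Option.some_inj.mp (mk_eq_of_walk q hq)
      exact hxy (by rw [← hx, ← hy, this])
    | none, _, hx, _ => exact hx.ne rfl
    | some _, none, _, hy => exact hy.ne rfl
  · obtain ⟨u, hu, hmin⟩ := c.support.toFinset.exists_min_image (Option.elim · 0 lev)
      ⟨v, List.mem_toFinset.mpr c.start_mem_support⟩
    rw [List.mem_toFinset] at hu
    obtain ⟨x, y, hx, hy, hxy, q, -, hqc⟩ := (hc.rotate hu).exists_walk_between_neighbors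
    have hup : ∀ t, (coneGraph up).Adj u t → t ∈ (c.rotate u hu).support → t = u.map up := by
      intro t ht htc
      rw [Walk.mem_support_rotate_iff] at htc
      match u, t with
      | none, _ => exact absurd hu hn
      | some _, none => exact absurd htc hn
      | some p, some p' =>
        exact congrArg some (eq_up_of_coneGraph_adj hlev ht (hmin _ (List.mem_toFinset.mpr htc)))
    exact hxy ((hup x hx (hqc q.start_mem_support)).trans
      (hup y hy.symm (hqc q.end_mem_support)).symm)

theorem coneGraph_isTree : (coneGraph up).IsTree :=
  ⟨coneGraph_connected hlev, coneGraph_isAcyclic hlev⟩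

end ConeGraph

end SimpleGraph

namespace SSG

section Action

variable {G : Type} {S : Type} (Φ : G → S → S × G)

def drop (n : ℕ) (η : ℕ → S) : ℕ → S := fun k => η (k + n)

lemma ssState_add (g : G) (ξ : ℕ → S) (k n : ℕ) :
    ssState Φ g ξ (k + n) = ssState Φ (ssState Φ g ξ n) (drop n ξ) k := by
  induction k with
  | zero => simp [ssState]
  | succ k ih => rw [Nat.add_right_comm, ssState, ih]; rfl

lemma drop_ssAct (g : G) (ξ : ℕ → S) (n : ℕ) :
    drop n (ssAct Φ g ξ) = ssAct Φ (ssState Φ g ξ n) (drop n ξ) := by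
  funext k
  simp only [drop, ssAct, ssState_add]

lemma ssStateWord_append_singleton (g : G) (v : List S) (s : S) :
    ssStateWord Φ g (v ++ [s]) = (Φ (ssStateWord Φ g v) s).2 := by
  induction v generalizing g with
  | nil => rfl
  | cons t v ih => exact ih _

variable [Group G] {Φ} (hone : ∀ s : S, Φ 1 s = (s, 1))
  (hcoc : ∀ (g h : G) (s : S),
    Φ (g * h) s = ((Φ g (Φ h s).1).1, (Φ g (Φ h s).1).2 * (Φ h s).2))

include hone in
lemma ssState_one (ξ : ℕ → S) (n : ℕ) : ssState Φ 1 ξ n = 1 := by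
  induction n with
  | zero => rfl
  | succ n ih => rw [ssState, ih, hone]

include hone in
lemma ssAct_one (ξ : ℕ → S) : ssAct Φ 1 ξ = ξ := by
  funext n
  rw [ssAct, ssState_one hone, hone]

include hcoc in
lemma ssState_mul (g h : G) (ξ : ℕ → S) (n : ℕ) :
    ssState Φ (g * h) ξ n = ssState Φ g (ssAct Φ h ξ) n * ssState Φ h ξ n := by
  induction n with
  | zero => rfl
  | succ n ih => rw [ssState, ih, hcoc]; rfl

include hcoc in
lemma ssAct_mul (g h : G) (ξ : ℕ → S) : ssAct Φ (g * h) ξ = ssAct Φ g (ssAct Φ h ξ) := by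
  funext n
  rw [ssAct, ssState_mul hcoc, hcoc]
  rfl

include hone hcoc in
lemma ssAct_inv_ssAct (g : G) (ξ : ℕ → S) : ssAct Φ g⁻¹ (ssAct Φ g ξ) = ξ := by
  rw [← ssAct_mul hcoc, inv_mul_cancel, ssAct_one hone]

include hone hcoc in
lemma snd_inv_eq_inv_snd (g : G) (s : S) : (Φ g⁻¹ s).2 = (Φ g (Φ g⁻¹ s).1).2⁻¹ := by
  have h := hcoc g g⁻¹ s
  rw [mul_inv_cancel, hone] at h
  exact eq_inv_of_mul_eq_one_right (congrArg Prod.snd h).symm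

include hone hcoc in
lemma exists_ssStateWord_inv (g : G) (v : List S) :
    ∃ v' : List S, v'.length = v.length ∧ ssStateWord Φ g⁻¹ v = (ssStateWord Φ g v')⁻¹ := by
  induction v generalizing g with
  | nil => exact ⟨[], rfl, rfl⟩
  | cons s v ih =>
    obtain ⟨v', hlen, hv'⟩ := ih (Φ g (Φ g⁻¹ s).1).2
    refine ⟨(Φ g⁻¹ s).1 :: v', by simp [hlen], ?_⟩
    rw [ssStateWord, snd_inv_eq_inv_snd hone hcoc, hv']
    rfl

end Action

section Nucleus

variable {G : Type} {S : Type} {Φ : G → S → S × G} {N : Finset G}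

variable (Φ N) in
/-- A left-infinite path in `N` ending at `g 0`. -/
def IsNucleusPath (g : ℕ → G) (s : ℕ → S) : Prop :=
  (∀ k, g k ∈ N) ∧ ∀ k, (Φ (g (k + 1)) (s k)).2 = g k

lemma IsNucleusPath.cons (hNclosed : ∀ g ∈ N, ∀ s : S, (Φ g s).2 ∈ N) {g : ℕ → G} {s : ℕ → S}
    (hp : IsNucleusPath Φ N g s) (a : S) :
    IsNucleusPath Φ N (fun | 0 => (Φ (g 0) a).2 | k + 1 => g k) (fun | 0 => a | k + 1 => s k) :=
  ⟨fun | 0 => hNclosed _ (hp.1 0) a | k + 1 => hp.1 k, fun | 0 => rfl | k + 1 => hp.2 k⟩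

variable (hNcontr : Contracting Φ N) (hNmin : ∀ N' : Finset G, Contracting Φ N' → N ⊆ N')
include hNcontr hNmin

/-- The states having a predecessor inside `N` already form a contracting set. -/
lemma exists_pred_mem_nucleus {h : G} (hh : h ∈ N) : ∃ p s, p ∈ N ∧ (Φ p s).2 = h := by
  classical
  refine (Finset.mem_filter.mp (hNmin (N.filter fun h => ∃ p s, p ∈ N ∧ (Φ p s).2 = h)
    (fun g => ?_) hh)).2
  obtain ⟨n, hn⟩ := hNcontr g
  refine ⟨n + 1, fun v hv => ?_⟩
  have hv0 : v ≠ [] := by rintro rfl; simp at hv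
  refine Finset.mem_filter.mpr ⟨hn v (by omega), _, v.getLast hv0,
    hn v.dropLast (by simp; omega), ?_⟩
  rw [← ssStateWord_append_singleton, List.dropLast_append_getLast hv0]

lemma exists_isNucleusPath {h : G} (hh : h ∈ N) : ∃ g s, IsNucleusPath Φ N g s ∧ g 0 = h := by
  choose p a hp using fun x : N => exists_pred_mem_nucleus hNcontr hNmin x.2
  let pred : N → N := fun x => ⟨p x, (hp x).1⟩
  refine ⟨fun k => pred^[k] ⟨h, hh⟩, fun k => a (pred^[k] ⟨h, hh⟩),
    ⟨fun k => (pred^[k] _).2, fun k => ?_⟩, rfl⟩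
  dsimp only
  rw [Function.iterate_succ_apply']
  exact (hp _).2

lemma exists_isNucleusPath_ssState (hNclosed : ∀ g ∈ N, ∀ s : S, (Φ g s).2 ∈ N) {h : G}
    (hh : h ∈ N) (η : ℕ → S) (n : ℕ) :
    ∃ g s, IsNucleusPath Φ N g s ∧ g 0 = ssState Φ h η n ∧ ∀ k < n, s (n - 1 - k) = η k := by
  induction n with
  | zero =>
    obtain ⟨g, s, hp, hg⟩ := exists_isNucleusPath hNcontr hNmin hh
    exact ⟨g, s, hp, hg, by simp⟩
  | succ n ih =>
    obtain ⟨g, s, hp, hg, hs⟩ := ih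
    refine ⟨_, _, hp.cons hNclosed (η n), by rw [hg]; rfl, fun k hk => ?_⟩
    rcases Nat.lt_succ_iff_lt_or_eq.mp hk with hk | rfl
    · rw [show n + 1 - 1 - k = n - 1 - k + 1 by omega]
      exact hs k hk
    · simp

variable [Group G] (hone : ∀ s : S, Φ 1 s = (s, 1))

include hone in
lemma exists_mem_postCritical_of_drop_ne (hNclosed : ∀ g ∈ N, ∀ s : S, (Φ g s).2 ∈ N)
    {h : G} (hh : h ∈ N) {η : ℕ → S} {n : ℕ} (hne : drop n (ssAct Φ h η) ≠ drop n η) :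
    ∃ s ∈ postCritical Φ N, ∀ k < n, s (n - 1 - k) = η k := by
  obtain ⟨g, s, ⟨hgN, hgs⟩, hg, hs⟩ := exists_isNucleusPath_ssState hNcontr hNmin hNclosed hh η n
  refine ⟨s, ⟨g, hgN, fun h1 => hne ?_, hgs⟩, hs⟩
  rw [drop_ssAct, ← hg, h1, ssAct_one hone]

include hone in
lemma inv_mem_nucleus (hcoc : ∀ (g h : G) (s : S),
    Φ (g * h) s = ((Φ g (Φ h s).1).1, (Φ g (Φ h s).1).2 * (Φ h s).2)) {h : G} (hh : h ∈ N) :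
    h⁻¹ ∈ N := by
  classical
  have hcontr : Contracting Φ (N.image (·⁻¹)) := fun g => by
    obtain ⟨n, hn⟩ := hNcontr g⁻¹
    refine ⟨n, fun v hv => ?_⟩
    obtain ⟨v', hlen, hv'⟩ := exists_ssStateWord_inv hone hcoc g⁻¹ v
    rw [inv_inv] at hv'
    exact Finset.mem_image.mpr ⟨_, hn v' (hlen ▸ hv), hv'.symm⟩
  obtain ⟨x, hx, rfl⟩ := Finset.mem_image.mp (hNmin _ hcontr hh)
  rwa [inv_inv]

end Nucleus

section Decomposition

open SimpleGraph

variable {G : Type} {S : Type} (Φ : G → S → S × G) (N : Finset G)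

def IsActive (n : ℕ) (η : ℕ → S) : Prop := ∃ h ∈ N, drop n (ssAct Φ h η) ≠ drop n η

def activeSet : Set (ℕ → S) := {η | ∀ n, IsActive Φ N n η}

variable (S) in
def nodeUp (p : ℕ × (ℕ → S)) : ℕ × (ℕ → S) := (p.1 + 1, drop 1 p.2)

def bag : Option (ℕ × (ℕ → S)) → Set (ℕ → S)
  | none => activeSet Φ N
  | some p => activeSet Φ N ∪ {η | drop p.1 η = p.2 ∧ ∀ k < p.1, IsActive Φ N k η}

lemma nodeUp_iterate (η : ℕ → S) (n : ℕ) : (nodeUp S)^[n] (0, η) = (n, drop n η) := by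
  induction n with
  | zero => rfl
  | succ n ih =>
    rw [Function.iterate_succ_apply', ih]
    simp only [nodeUp, Prod.mk.injEq, true_and]
    funext k
    simp only [drop, Nat.add_right_comm k 1 n, add_assoc]

lemma coneGraph_nodeUp_isTree : (coneGraph (nodeUp S)).IsTree :=
  coneGraph_isTree (lev := Prod.fst) fun _ => rfl

lemma connected_induce_mem_bag (η : ℕ → S) :
    ((coneGraph (nodeUp S)).induce {t | η ∈ bag Φ N t}).Connected := by
  classical
  by_cases hη : η ∈ activeSet Φ N
  · have huniv : {t | η ∈ bag Φ N t} = Set.univ := by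
      ext (_ | p)
      exacts [iff_of_true hη trivial, iff_of_true (Or.inl hη) trivial]
    rw [huniv]
    exact (induceUnivIso _).connected_iff.mpr coneGraph_nodeUp_isTree.1
  · have hex : ∃ n, ¬ IsActive Φ N n η := by simpa [activeSet] using hη
    have hnodes : {t | η ∈ bag Φ N t} =
        (fun n => some ((nodeUp S)^[n] (0, η))) '' Set.Iic (Nat.find hex) := by
      ext (_ | ⟨n, ζ⟩)
      · simpa [bag] using hη
      · simp only [bag, Set.mem_ofPred_eq, Set.mem_union, hη, false_or, nodeUp_iterate,
          Set.mem_image, Set.mem_Iic, Option.some.injEq, Prod.mk.injEq, Nat.le_find_iff,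
          not_not]
        constructor
        · rintro ⟨rfl, h⟩
          exact ⟨n, h, rfl, rfl⟩
        · rintro ⟨_, h, rfl, rfl⟩
          exact ⟨rfl, h⟩
    rw [hnodes]
    refine connected_induce_image_Iic _ (fun n => ?_) _
    rw [Function.iterate_succ_apply']
    exact coneGraph_adj_up (lev := Prod.fst) (fun _ => rfl) _

end Decomposition

section BagProperties

variable {G : Type} [Group G] {S : Type} {Φ : G → S → S × G} {N : Finset G}
  (hone : ∀ s : S, Φ 1 s = (s, 1)) (hNclosed : ∀ g ∈ N, ∀ s : S, (Φ g s).2 ∈ N)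
  (hNcontr : Contracting Φ N) (hNmin : ∀ N' : Finset G, Contracting Φ N' → N ⊆ N')

include hone hNcontr hNmin in
lemma exists_mem_bag_of_mem_nucleus (hcoc : ∀ (g h : G) (s : S),
      Φ (g * h) s = ((Φ g (Φ h s).1).1, (Φ g (Φ h s).1).2 * (Φ h s).2))
    {h : G} (hh : h ∈ N) (η : ℕ → S) :
    ∃ t, η ∈ bag Φ N t ∧ ssAct Φ h η ∈ bag Φ N t := by
  classical
  have hinv := inv_mem_nucleus hNcontr hNmin hone hcoc hh
  have hactive : ∀ n, drop n (ssAct Φ h η) ≠ drop n η →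
      IsActive Φ N n η ∧ IsActive Φ N n (ssAct Φ h η) := fun n hn =>
    ⟨⟨h, hh, hn⟩, ⟨h⁻¹, hinv, by rw [ssAct_inv_ssAct hone hcoc]; exact hn.symm⟩⟩
  by_cases hex : ∃ n, drop n (ssAct Φ h η) = drop n η
  · have hbelow : ∀ k < Nat.find hex, _ := fun k hk => hactive k (Nat.find_min hex hk)
    exact ⟨some (Nat.find hex, drop (Nat.find hex) η),
      Or.inr ⟨rfl, fun k hk => (hbelow k hk).1⟩,
      Or.inr ⟨Nat.find_spec hex, fun k hk => (hbelow k hk).2⟩⟩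
  · rw [not_exists] at hex
    exact ⟨none, fun n => (hactive n (hex n)).1, fun n => (hactive n (hex n)).2⟩

include hone hNclosed hNcontr hNmin

lemma prefix_mem_range_of_isActive {n : ℕ} {η : ℕ → S} (h : IsActive Φ N n η) :
    (fun k : Fin n => η k) ∈
      Set.range fun s : postCritical Φ N => fun k : Fin n => s.1 (n - 1 - k) := by
  obtain ⟨h, hh, hne⟩ := h
  obtain ⟨s, hs, hpre⟩ := exists_mem_postCritical_of_drop_ne hNcontr hNmin hone hNclosed hh hne
  exact ⟨⟨s, hs⟩, funext fun k => hpre k k.2⟩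

lemma activeSet_finite (hpcf : (postCritical Φ N).Finite) : (activeSet Φ N).Finite :=
  have := hpcf.to_subtype
  Set.finite_of_forall_prefix_mem_range _ fun n _ hη =>
    prefix_mem_range_of_isActive hone hNclosed hNcontr hNmin (hη n)

lemma finite_ncard_le_of_drop_eq [Finite S] (hpcf : (postCritical Φ N).Finite) (n : ℕ)
    (ζ : ℕ → S) :
    {η | drop n η = ζ ∧ ∀ k < n, IsActive Φ N k η}.Finite ∧
      {η | drop n η = ζ ∧ ∀ k < n, IsActive Φ N k η}.ncard ≤
        Nat.card (postCritical Φ N) * Nat.card S + 1 := by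
  have := hpcf.to_subtype
  cases n with
  | zero =>
    have hsub : {η | drop 0 η = ζ ∧ ∀ k < 0, IsActive Φ N k η} ⊆ {ζ} := fun η hη => hη.1
    exact ⟨(Set.finite_singleton ζ).subset hsub,
      (Set.ncard_le_ncard hsub).trans (by rw [Set.ncard_singleton]; omega)⟩
  | succ m =>
    set T := (Set.range fun s : postCritical Φ N => fun k : Fin m => s.1 (m - 1 - k)) ×ˢ
      (Set.univ : Set S)
    have hT : T.Finite := (Set.finite_range _).prod Set.finite_univ
    have hmaps : Set.MapsTo (fun η => ((fun k : Fin m => η k), η m))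
        {η | drop (m + 1) η = ζ ∧ ∀ k < m + 1, IsActive Φ N k η} T := fun η hη =>
      ⟨prefix_mem_range_of_isActive hone hNclosed hNcontr hNmin (hη.2 m m.lt_succ_self),
        trivial⟩
    have hinj : Set.InjOn (fun η => ((fun k : Fin m => η k), η m))
        {η | drop (m + 1) η = ζ ∧ ∀ k < m + 1, IsActive Φ N k η} := by
      intro η hη η' hη' heq
      simp only [Prod.mk.injEq] at heq
      funext k
      rcases lt_trichotomy k m with hk | rfl | hk
      · exact congrFun heq.1 ⟨k, hk⟩
      · exact heq.2
      · have := congrFun (hη.1.trans hη'.1.symm) (k - (m + 1))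
        simpa only [drop, Nat.sub_add_cancel hk] using this
    refine ⟨Set.Finite.of_injOn hmaps hinj hT,
      (Set.ncard_le_ncard_of_injOn _ hmaps hinj hT).trans (le_add_right ?_)⟩
    rw [Set.ncard_prod, Set.ncard_univ, ← Set.image_univ]
    exact Nat.mul_le_mul_right _
      ((Set.ncard_image_le Set.finite_univ).trans_eq (Set.ncard_univ _))

lemma bag_finite_ncard_le [Finite S] (hpcf : (postCritical Φ N).Finite)
    (t : Option (ℕ × (ℕ → S))) :
    (bag Φ N t).Finite ∧ (bag Φ N t).ncard ≤
      (activeSet Φ N).ncard + (Nat.card (postCritical Φ N) * Nat.card S + 1) := by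
  have hF := activeSet_finite hone hNclosed hNcontr hNmin hpcf
  cases t with
  | none => exact ⟨hF, le_self_add⟩
  | some p =>
    obtain ⟨hfin, hcard⟩ := finite_ncard_le_of_drop_eq hone hNclosed hNcontr hNmin hpcf p.1 p.2
    exact ⟨hF.union hfin, (Set.ncard_union_le _ _).trans (Nat.add_le_add_left hcard _)⟩

end BagProperties

end SSG

open SSG in
theorem pcf_schreier_graph_finite_treewidth_general
    {G : Type} [Group G] {S : Type} [Fintype S]
    (Φ : G → S → S × G)
    (hone : ∀ s : S, Φ 1 s = (s, 1))
    (hcoc : ∀ (g h : G) (s : S),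
      Φ (g * h) s = ((Φ g (Φ h s).1).1, (Φ g (Φ h s).1).2 * (Φ h s).2))
    (N : Finset G)
    (hNclosed : ∀ g ∈ N, ∀ s : S, (Φ g s).2 ∈ N)
    (hNcontr : Contracting Φ N)
    (hNmin : ∀ N' : Finset G, Contracting Φ N' → N ⊆ N')
    (hpcf : (postCritical Φ N).Finite)
    (ξ : ℕ → S) :
    ∃ (T : Type) (Δ : SimpleGraph T), Δ.IsTree ∧
      ∃ X : T → Set {η : ℕ → S // η ∈ orbitSet Φ ξ},
        (∀ u : {η : ℕ → S // η ∈ orbitSet Φ ξ},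
          (Δ.induce {t : T | u ∈ X t}).Connected) ∧
        (∀ u v : {η : ℕ → S // η ∈ orbitSet Φ ξ},
          (schreierGraph Φ N ξ).Adj u v → ∃ t : T, u ∈ X t ∧ v ∈ X t) ∧
        ∃ w : ℕ, ∀ t : T, (X t).Finite ∧ (X t).ncard ≤ w := by
  refine ⟨_, _, coneGraph_nodeUp_isTree, fun t => Subtype.val ⁻¹' bag Φ N t,
    fun u => connected_induce_mem_bag Φ N u.1, fun u v huv => ?_,
    (activeSet Φ N).ncard + (Nat.card (postCritical Φ N) * Nat.card S + 1), fun t => ?_⟩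
  · obtain ⟨-, ⟨h, hh, huv⟩ | ⟨h, hh, hvu⟩⟩ := (SimpleGraph.fromRel_adj _ _ _).mp huv
    · obtain ⟨t, hu, hv⟩ := exists_mem_bag_of_mem_nucleus hone hNcontr hNmin hcoc hh u.1
      exact ⟨t, hu, show v.1 ∈ _ from huv ▸ hv⟩
    · obtain ⟨t, hv, hu⟩ := exists_mem_bag_of_mem_nucleus hone hNcontr hNmin hcoc hh v.1
      exact ⟨t, show u.1 ∈ _ from hvu ▸ hu, hv⟩
  · obtain ⟨hfin, hcard⟩ := bag_finite_ncard_le hone hNclosed hNcontr hNmin hpcf t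
    have hval := Subtype.val_injective (p := (· ∈ orbitSet Φ ξ))
    exact ⟨hfin.preimage hval.injOn,
      (Set.ncard_le_ncard_of_injOn Subtype.val (fun _ h => h) hval.injOn hfin).trans hcard⟩

open SSG in
/-- **Schreier graphs of post-critically finite self-similar groups have finite
treewidth** (Proposition 3.3): for `G` a finitely generated bounded (post-critically
finite) self-similar group with nucleus `N` and `ξ ∈ S^ℕ`, the Schreier graph of the
orbit `G·ξ` admits a tree decomposition whose bags are finite of uniformly bounded
size. -/
theorem pcf_schreier_graph_finite_treewidth
    {G : Type} [Group G] {S : Type} [Fintype S]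
    (Φ : G → S → S × G)
    (hone : ∀ s : S, Φ 1 s = (s, 1))
    (hcoc : ∀ (g h : G) (s : S),
      Φ (g * h) s = ((Φ g (Φ h s).1).1, (Φ g (Φ h s).1).2 * (Φ h s).2))
    (hfaithful : ∀ g : G, (∀ ξ : ℕ → S, ssAct Φ g ξ = ξ) → g = 1)
    (hfg : Group.FG G)
    (N : Finset G)
    (hNone : (1 : G) ∈ N)
    (hNclosed : ∀ g ∈ N, ∀ s : S, (Φ g s).2 ∈ N)
    (hNcontr : Contracting Φ N)
    (hNmin : ∀ N' : Finset G, Contracting Φ N' → N ⊆ N')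
    (hpcf : (postCritical Φ N).Finite)
    (ξ : ℕ → S) :
    ∃ (T : Type) (Δ : SimpleGraph T), Δ.IsTree ∧
      ∃ X : T → Set {η : ℕ → S // η ∈ orbitSet Φ ξ},
        (∀ u : {η : ℕ → S // η ∈ orbitSet Φ ξ},
          (Δ.induce {t : T | u ∈ X t}).Connected) ∧
        (∀ u v : {η : ℕ → S // η ∈ orbitSet Φ ξ},
          (schreierGraph Φ N ξ).Adj u v → ∃ t : T, u ∈ X t ∧ v ∈ X t) ∧
        ∃ w : ℕ, ∀ t : T, (X t).Finite ∧ (X t).ncard ≤ w :=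
  pcf_schreier_graph_finite_treewidth_general Φ hone hcoc N hNclosed hNcontr hNmin hpcf ξ
end

section
/- Let bin : ℤ → {0,1}^ℕ be the two's-complement binary digit map, bin(n)_i = ⌊n / 2^i⌋ mod 2 (so bin(n) is eventually 0 for n ≥ 0 and eventually 1 for n < 0). Define transformations t, u of the set of eventually constant sequences in {0,1}^ℕ by: t(1^k 0 ξ) = 0^k 1 ξ for k ≥ 0, t(1^∞) = 0^∞; and u(0^k 1 ξ) = 0^k 1 t(ξ) for k ≥ 0, u(0^∞) = 0^∞. Then for all n ∈ ℤ: t(bin(n)) = bin(n+1); u(bin(0)) = bin(0); and u(bin(n)) = bin(n + 2^{v₂(n)+1}) for n ≠ 0, where v₂(n) is the 2-adic valuation of n. Consequently, the Schreier graph of the action of t and u on the image of bin is isomorphic to the long range graph. -/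
open scoped Classical

/-- Two's-complement binary digits of an integer: `bin n i = ⌊n / 2^i⌋ mod 2`.
For `n ≥ 0` this is eventually `false`, for `n < 0` eventually `true`. -/
def bin (n : ℤ) (i : ℕ) : Bool :=
  decide (Int.fdiv n (2 ^ i) % 2 = 1)

/-- The odometer transformation `t`: it maps `1^k 0 ξ` to `0^k 1 ξ` and `1^∞` to `0^∞`
(the digit at position `n` is flipped exactly when all earlier digits equal `1`). -/
def tMap (ξ : ℕ → Bool) : ℕ → Bool := fun n =>
  if ∀ i < n, ξ i = true then !(ξ n) else ξ n

/-- The transformation `u`: it maps `0^k 1 ξ` to `0^k 1 (t ξ)` and `0^∞` to `0^∞`. -/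
noncomputable def uMap (ξ : ℕ → Bool) : ℕ → Bool := fun n =>
  if h : ∃ i, ξ i = true then
    if n ≤ Nat.find h then ξ n
    else tMap (fun j => ξ (j + (Nat.find h + 1))) (n - (Nat.find h + 1))
  else ξ n

/-!
Both transformations read a sequence digit by digit: `t` flips the leading digit and carries
into the tail exactly when that digit is `1`, while `u` leaves the leading digit alone and
then either applies `t` to the tail (leading digit `1`) or recurses into the tail (leading
digit `0`). Since `bin n` has leading digit `n mod 2` and tail `bin (n / 2)`, the identities
`n + 1 = 2 (n / 2 + 1)` for odd `n` and `2k + 2^(v₂(2k)+1) = 2 (k + 2^(v₂ k + 1))` turn both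
claims into inductions on the digit position.
-/

lemma bin_eq_decide_ediv (n : ℤ) (i : ℕ) : bin n i = decide (n / 2 ^ i % 2 = 1) := by
  rw [bin, Int.fdiv_eq_ediv_of_nonneg _ (by positivity)]

lemma bin_apply_zero (n : ℤ) : bin n 0 = decide (n % 2 = 1) := by
  simp [bin_eq_decide_ediv]

lemma bin_apply_succ (n : ℤ) (i : ℕ) : bin n (i + 1) = bin (n / 2) i := by
  rw [bin_eq_decide_ediv, bin_eq_decide_ediv, pow_succ',
    Int.ediv_ediv_of_nonneg (by norm_num : (0 : ℤ) ≤ 2)]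

lemma bin_shift (n : ℤ) : (fun i => bin n (i + 1)) = bin (n / 2) :=
  funext (bin_apply_succ n)

lemma two_pow_dvd_sub_of_bin_eq {m n : ℤ} (h : bin m = bin n) (i : ℕ) : 2 ^ i ∣ m - n := by
  induction i generalizing m n with
  | zero => simp
  | succ i ih =>
    have hmod : m % 2 = n % 2 := by
      have h0 := congrFun h 0
      simp only [bin_apply_zero, decide_eq_decide] at h0
      omega
    have hdiv : 2 ^ i ∣ m / 2 - n / 2 := ih (by rw [← bin_shift, ← bin_shift, h])
    have hsub : m - n = 2 * (m / 2 - n / 2) := by omega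
    rw [hsub, pow_succ']
    exact mul_dvd_mul_left 2 hdiv

lemma bin_injective : Function.Injective bin := by
  intro m n h
  have hdvd : ((2 : ℕ) : ℤ) ^ (padicValInt 2 (m - n) + 1) ∣ m - n :=
    two_pow_dvd_sub_of_bin_eq h _
  rcases (padicValInt_dvd_iff _ _).mp hdvd with hsub | hle
  · exact sub_eq_zero.mp hsub
  · omega

lemma tMap_apply_zero (ξ : ℕ → Bool) : tMap ξ 0 = !ξ 0 := by
  simp [tMap]

lemma tMap_apply_succ (ξ : ℕ → Bool) (i : ℕ) :
    tMap ξ (i + 1) = if ξ 0 = true then tMap (fun j => ξ (j + 1)) i else ξ (i + 1) := by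
  simp only [tMap, Nat.forall_lt_succ_left]
  by_cases h : ξ 0 = true <;> simp [h]

lemma uMap_apply_zero (ξ : ℕ → Bool) : uMap ξ 0 = ξ 0 := by
  simp [uMap]

lemma uMap_apply_succ (ξ : ℕ → Bool) (i : ℕ) :
    uMap ξ (i + 1) =
      if ξ 0 = true then tMap (fun j => ξ (j + 1)) i else uMap (fun j => ξ (j + 1)) i := by
  by_cases h0 : ξ 0 = true
  · have hex : ∃ i, ξ i = true := ⟨0, h0⟩
    have hfind : Nat.find hex = 0 := (Nat.find_eq_zero hex).mpr h0
    simp [uMap, h0, hex, hfind]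
  by_cases htail : ∃ i, ξ (i + 1) = true
  · have hex : ∃ i, ξ i = true := ⟨_, htail.choose_spec⟩
    have hfind : Nat.find hex = Nat.find htail + 1 := Nat.find_comp_succ hex htail h0
    simp [uMap, h0, hex, htail, hfind, add_assoc]
  · have hex : ¬∃ i, ξ i = true := by
      rintro ⟨_ | i, hi⟩
      exacts [h0 hi, htail ⟨i, hi⟩]
    simp [uMap, h0, hex, htail]

lemma tMap_bin (n : ℤ) : tMap (bin n) = bin (n + 1) := by
  funext i
  induction i generalizing n with
  | zero =>
    simp only [tMap_apply_zero, bin_apply_zero, show (n + 1) % 2 = 1 ↔ ¬n % 2 = 1 by omega,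
      decide_not]
  | succ i ih =>
    rw [tMap_apply_succ, bin_shift, bin_apply_zero, bin_apply_succ n, bin_apply_succ (n + 1)]
    rcases Int.emod_two_eq n with h | h
    · rw [show (n + 1) / 2 = n / 2 by omega]
      simp [h]
    · rw [ih, show (n + 1) / 2 = n / 2 + 1 by omega]
      simp [h]

lemma uMap_bin_zero : uMap (bin 0) = bin 0 := by
  funext i
  simp [uMap, bin]

lemma uMap_bin_of_ne_zero {n : ℤ} (hn : n ≠ 0) :
    uMap (bin n) = bin (n + 2 ^ (padicValInt 2 n + 1)) := by
  funext i
  induction i generalizing n with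
  | zero =>
    rw [uMap_apply_zero, bin_apply_zero, bin_apply_zero, pow_succ', Int.add_mul_emod_self_left]
  | succ i ih =>
    rw [uMap_apply_succ, bin_shift, bin_apply_zero, bin_apply_succ]
    rcases Int.emod_two_eq n with h | h
    · obtain ⟨k, rfl⟩ : 2 ∣ n := Int.dvd_of_emod_eq_zero h
      have hk : k ≠ 0 := right_ne_zero_of_mul hn
      have hv : padicValInt 2 (2 * k) = padicValInt 2 k + 1 := by
        rw [mul_comm]; exact padicValInt_mul_eq_succ k hk
      rw [hv, pow_succ' 2 (padicValInt 2 k + 1), ← mul_add,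
        Int.mul_ediv_cancel_left _ two_ne_zero]
      simp [h, ih hk]
    · have hv : padicValInt 2 n = 0 := padicValInt.eq_zero_of_not_dvd (by omega)
      rw [hv, tMap_bin, show (n + 2 ^ (0 + 1)) / 2 = n / 2 + 1 by omega]
      simp [h]

/-- Under two's-complement binary encoding `bin : ℤ → {0,1}^ℕ`, the transducer-defined
transformations `t` and `u` act on codes of integers by `n ↦ n + 1`, respectively by
`0 ↦ 0` and `n ↦ n + 2^(v₂(n)+1)` for `n ≠ 0`.  Together with the injectivity of `bin`,
this says that the Schreier graph of the action of `t, u` on the image of `bin` is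
isomorphic to the long range graph. -/
theorem longrange_transducer_action :
    Function.Injective bin ∧
    (∀ n : ℤ, tMap (bin n) = bin (n + 1)) ∧
    uMap (bin 0) = bin 0 ∧
    (∀ n : ℤ, n ≠ 0 → uMap (bin n) = bin (n + 2 ^ (padicValInt 2 n + 1))) :=
  ⟨bin_injective, tMap_bin, uMap_bin_zero, fun _ hn => uMap_bin_of_ne_zero hn⟩
end

section
/- Encode n ∈ ℤ by its two's-complement binary digits bin(n)_i = ⌊n / 2^i⌋ mod 2, and encode m ∈ ℕ by its Gray code Gray(m)_i = bin(m)_i XOR bin(m)_{i+1}; encode (m,n) ∈ ℕ × ℤ as the sequence of pairs ((Gray(m)_i, bin(n)_i))_{i ∈ ℕ} over the alphabet S = {0,1} × {0,1}. Define transformations z, x, y of S^ℕ by the transducer with states z, x, y, e over S: state z reads (a,1) and outputs (a,0) staying at z, reads (a,0) and outputs (a,1) passing to the identity state e; state x reads (1,b) and outputs (0,b), reads (0,b) and outputs (1,b), passing to e; state y reads (0,0) and outputs (0,0) staying at y, reads (1,0) and outputs (1,0) passing to x, and reads (a,1) and outputs (a,1) passing to e. Then, under the encoding: z maps the code of (m,n)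 to the code of (m,n+1); x exchanges the codes of (2m,n) and (2m+1,n); and y fixes the codes of (0,n) for all n, exchanges the codes of (k−1,n) and (k,n) for every even k ≥ 2 and every n divisible by 2^{v₂(k)} (v₂ the 2-adic valuation), and fixes the codes of (k−1,n) and (k,n) for even k when 2^{v₂(k)} does not divide n. Consequently, the Schreier graph of the action of x, y, z on the orbit of the code of (0,0) is isomorphic to the Barbieri–Sablik H-graph. -/
open scoped Classical

/-- Two's-complement binary digits of an integer: `binZ n i = ⌊n / 2^i⌋ mod 2`. -/
def binZ (n : ℤ) (i : ℕ) : Bool :=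
  decide (Int.fdiv n (2 ^ i) % 2 = 1)

/-- Binary digits of a natural number. -/
def binN (m : ℕ) (i : ℕ) : Bool :=
  decide (m / 2 ^ i % 2 = 1)

/-- Gray code of a natural number: `Gray(m)_i = bin(m)_i XOR bin(m)_{i+1}`. -/
def gray (m : ℕ) (i : ℕ) : Bool :=
  xor (binN m i) (binN m (i + 1))

/-- Encoding of `(m,n) ∈ ℕ × ℤ` over the alphabet `S = {0,1} × {0,1}`: the sequence of
pairs `((Gray m)_i, (bin n)_i)`. -/
def code (m : ℕ) (n : ℤ) : ℕ → Bool × Bool :=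
  fun i => (gray m i, binZ n i)

/-- The transformation given by state `z` of the transducer: it reads `(a,1)` outputting
`(a,0)` and staying at `z`, and reads `(a,0)` outputting `(a,1)` and passing to the
identity state (an odometer on second components). -/
def zAct (ξ : ℕ → Bool × Bool) : ℕ → Bool × Bool := fun n =>
  ((ξ n).1, if ∀ i < n, (ξ i).2 = true then !(ξ n).2 else (ξ n).2)

/-- The transformation given by state `x` of the transducer: it flips the first component
of the first letter and passes to the identity state. -/
def xAct (ξ : ℕ → Bool × Bool) : ℕ → Bool × Bool := fun n =>
  if n = 0 then (!(ξ 0).1, (ξ 0).2) else ξ n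

/-- The transformation given by state `y` of the transducer: it reads `(0,0)` outputting
`(0,0)` and staying at `y`; reads `(1,0)` outputting `(1,0)` and passing to state `x`;
and reads `(a,1)` outputting `(a,1)` and passing to the identity state.  Concretely, at
the first letter different from `(0,0)`: if that letter is `(1,0)`, the first component
of the following letter is flipped; otherwise nothing changes. -/
noncomputable def yAct (ξ : ℕ → Bool × Bool) : ℕ → Bool × Bool := fun n =>
  if h : ∃ i, ξ i ≠ (false, false) then
    if n = Nat.find h + 1 ∧ ξ (Nat.find h) = (true, false) then
      (!(ξ n).1, (ξ n).2)
    else ξ n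
  else ξ n

/-! Each identity is a statement about binary digits, proved by induction on the digit position,
halving the number at each step (`binZ_succ`, `gray_succ`).  The state `z` is the binary odometer on
the second components, and `x` flips the lowest Gray digit, the only one in which `2m` and `2m+1`
differ.  For even `k` with `v = v₂(k) ≥ 1`, the Gray codes of `k - 1` and `k` both begin with
`v - 1` zeros followed by a one and differ only at position `v`.  So if `2^v ∣ n`, the first letter
other than `(0,0)` in either code is `(1,0)`, at position `v - 1`, and `y` flips the Gray digit at
`v`; otherwise some binary digit of `n` below `v` is `1`, the first letter other than `(0,0)` is
not `(1,0)`, and `y` acts trivially. -/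

lemma binZ_eq_ediv (n : ℤ) (i : ℕ) : binZ n i = decide (n / 2 ^ i % 2 = 1) := by
  rw [binZ, Int.fdiv_eq_ediv_of_nonneg _ (by positivity)]

lemma binZ_zero (n : ℤ) : binZ n 0 = decide (n % 2 = 1) := by
  simp [binZ_eq_ediv]

lemma binZ_succ (n : ℤ) (i : ℕ) : binZ n (i + 1) = binZ (n / 2) i := by
  rw [binZ_eq_ediv, binZ_eq_ediv, Int.ediv_ediv_of_nonneg (by norm_num), pow_succ']

lemma binZ_add_one (n : ℤ) (i : ℕ) :
    binZ (n + 1) i = if ∀ j < i, binZ n j = true then !binZ n i else binZ n i := by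
  induction i generalizing n with
  | zero =>
    simp only [binZ_zero, Nat.not_lt_zero, IsEmpty.forall_iff, implies_true, if_true]
    by_cases h : n % 2 = 1 <;> simp [h] <;> omega
  | succ i ih =>
    simp only [binZ_succ, Nat.forall_lt_succ_left, binZ_zero, decide_eq_true_eq]
    by_cases h : n % 2 = 1
    · rw [show (n + 1) / 2 = n / 2 + 1 by omega, ih]
      simp [h]
    · rw [show (n + 1) / 2 = n / 2 by omega]
      simp [h]

lemma forall_binZ_eq_false_iff (n : ℤ) (v : ℕ) :
    (∀ i < v, binZ n i = false) ↔ 2 ^ v ∣ n := by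
  induction v generalizing n with
  | zero => simp
  | succ v ih =>
    simp only [Nat.forall_lt_succ_left, binZ_zero, binZ_succ, ih, decide_eq_false_iff_not]
    constructor
    · rintro ⟨hn, k, hk⟩
      exact ⟨k, by rw [pow_succ', mul_assoc, ← hk]; omega⟩
    · rintro ⟨k, rfl⟩
      refine ⟨by rw [pow_succ', mul_assoc]; omega, k, ?_⟩
      rw [pow_succ', mul_assoc, Int.mul_ediv_cancel_left _ two_ne_zero]

lemma binZ_injective : Function.Injective binZ := by
  intro n n' h
  induction hd : (n - n').natAbs using Nat.strong_induction_on generalizing n n' with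
  | _ d ih =>
    have hmod : n % 2 = n' % 2 := by
      have := congrFun h 0
      simp only [binZ_zero, decide_eq_decide] at this
      omega
    by_contra hne
    have hhalf : n / 2 = n' / 2 :=
      ih _ (by omega) (funext fun i => by rw [← binZ_succ, ← binZ_succ, h]) rfl
    omega

lemma binN_zero (m : ℕ) : binN m 0 = decide (m % 2 = 1) := by
  simp [binN]

lemma binN_succ (m i : ℕ) : binN m (i + 1) = binN (m / 2) i := by
  rw [binN, binN, Nat.div_div_eq_div_mul, pow_succ']

lemma gray_zero (m : ℕ) : gray m 0 = decide ((m + m / 2) % 2 = 1) := by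
  rw [gray, binN_succ, binN_zero, binN_zero]
  by_cases h : m % 2 = 1 <;> by_cases h' : m / 2 % 2 = 1 <;> simp [h, h'] <;> omega

lemma gray_succ (m i : ℕ) : gray m (i + 1) = gray (m / 2) i := by
  rw [gray, gray, binN_succ, binN_succ]

lemma gray_injective : Function.Injective gray := by
  suffices ∀ N m m', m < 2 ^ N → m' < 2 ^ N → gray m = gray m' → m = m' from
    fun m m' => this (m + m') m m' (by grind [Nat.lt_two_pow_self])
      (by grind [Nat.lt_two_pow_self])
  intro N
  induction N with
  | zero => intro m m' hm hm' _; omega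
  | succ N ih =>
    intro m m' hm hm' h
    have hhalf : m / 2 = m' / 2 :=
      ih _ _ (by omega) (by omega) (funext fun i => by rw [← gray_succ, ← gray_succ, h])
    have := congrFun h 0
    simp only [gray_zero, decide_eq_decide] at this
    omega

lemma gray_zero_left (i : ℕ) : gray 0 i = false := by
  simp [gray, binN]

lemma gray_two_mul_add_one_zero (m : ℕ) : gray (2 * m + 1) 0 = !gray (2 * m) 0 := by
  rw [gray_zero, gray_zero, ← decide_not, decide_eq_decide]
  omega

lemma gray_two_mul_add_one_succ (m i : ℕ) : gray (2 * m + 1) (i + 1) = gray (2 * m) (i + 1) := by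
  rw [gray_succ, gray_succ, show (2 * m + 1) / 2 = 2 * m / 2 by omega]

lemma padicValNat_two_of_even {m : ℕ} (hm : m ≠ 0) (h : m % 2 = 0) :
    padicValNat 2 m = padicValNat 2 (m / 2) + 1 := by
  have := one_le_padicValNat_of_dvd (p := 2) hm (Nat.dvd_of_mod_eq_zero h)
  rw [padicValNat.div (Nat.dvd_of_mod_eq_zero h)]
  omega

lemma padicValNat_two_of_odd {m : ℕ} (h : m % 2 = 1) : padicValNat 2 m = 0 :=
  padicValNat.eq_zero_of_not_dvd (by omega)

lemma gray_sub_one_eq_iff {m : ℕ} (hm : m ≠ 0) (i : ℕ) :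
    gray (m - 1) i = gray m i ↔ i ≠ padicValNat 2 m := by
  induction i generalizing m with
  | zero =>
    rw [gray_zero, gray_zero, decide_eq_decide]
    rcases Nat.mod_two_eq_zero_or_one m with h | h
    · rw [padicValNat_two_of_even hm h]; omega
    · rw [padicValNat_two_of_odd h]; omega
  | succ i ih =>
    rw [gray_succ, gray_succ]
    rcases Nat.mod_two_eq_zero_or_one m with h | h
    · rw [padicValNat_two_of_even hm h, show (m - 1) / 2 = m / 2 - 1 by omega, ih (by omega)]
      omega
    · rw [padicValNat_two_of_odd h, show (m - 1) / 2 = m / 2 by omega]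
      simp

lemma padicValNat_two_of_pos {m : ℕ} (h : 0 < padicValNat 2 m) :
    m ≠ 0 ∧ m % 2 = 0 ∧ padicValNat 2 m = padicValNat 2 (m / 2) + 1 := by
  have hm : m ≠ 0 := by rintro rfl; simp at h
  have heven : m % 2 = 0 := Nat.mod_eq_zero_of_dvd (dvd_of_one_le_padicValNat h)
  exact ⟨hm, heven, padicValNat_two_of_even hm heven⟩

lemma gray_eq_false_of_succ_lt_padicValNat {m i : ℕ} (h : i + 1 < padicValNat 2 m) :
    gray m i = false := by
  induction i generalizing m with
  | zero =>
    obtain ⟨-, hm, hv⟩ := padicValNat_two_of_pos (m := m) (by omega)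
    obtain ⟨-, hm', -⟩ := padicValNat_two_of_pos (m := m / 2) (by omega)
    rw [gray_zero, decide_eq_false_iff_not]
    omega
  | succ i ih =>
    obtain ⟨-, -, hv⟩ := padicValNat_two_of_pos (m := m) (by omega)
    rw [gray_succ]
    exact ih (by omega)

lemma gray_of_padicValNat_eq_succ {m i : ℕ} (h : padicValNat 2 m = i + 1) : gray m i = true := by
  induction i generalizing m with
  | zero =>
    obtain ⟨hm0, hm, hv⟩ := padicValNat_two_of_pos (m := m) (by omega)
    have hodd := (padicValNat.eq_zero_iff (p := 2) (n := m / 2)).1 (by omega)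
    rw [gray_zero, decide_eq_true_iff]
    omega
  | succ i ih =>
    obtain ⟨-, -, hv⟩ := padicValNat_two_of_pos (m := m) (by omega)
    rw [gray_succ]
    exact ih (by omega)

lemma zAct_code (m : ℕ) (n : ℤ) : zAct (code m n) = code m (n + 1) := by
  funext i
  simp only [zAct, code, binZ_add_one]
  congr

lemma xAct_involutive : Function.Involutive xAct := by
  intro ξ
  funext i
  by_cases hi : i = 0 <;> simp [xAct, hi]

lemma xAct_code_two_mul (m : ℕ) (n : ℤ) : xAct (code (2 * m) n) = code (2 * m + 1) n := by
  funext i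
  cases i with
  | zero => simp [xAct, code, gray_two_mul_add_one_zero]
  | succ i => simp [xAct, code, gray_two_mul_add_one_succ]

lemma xAct_code_two_mul_add_one (m : ℕ) (n : ℤ) :
    xAct (code (2 * m + 1) n) = code (2 * m) n := by
  rw [← xAct_code_two_mul, xAct_involutive]

lemma yAct_eq_self {ξ : ℕ → Bool × Bool}
    (h : ∀ j, (∀ i < j, ξ i = (false, false)) → ξ j ≠ (true, false)) : yAct ξ = ξ := by
  funext n
  unfold yAct
  split_ifs with hex hn
  · exact absurd hn.2 (h _ fun i hi => not_not.1 (Nat.find_min hex hi))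
  all_goals rfl

lemma yAct_eq_of_lead {ξ : ℕ → Bool × Bool} {j : ℕ} (hpre : ∀ i < j, ξ i = (false, false))
    (hj : ξ j = (true, false)) :
    yAct ξ = fun n => if n = j + 1 then (!(ξ n).1, (ξ n).2) else ξ n := by
  have hex : ∃ i, ξ i ≠ (false, false) := ⟨j, by simp [hj]⟩
  have hfind : Nat.find hex = j :=
    (Nat.find_eq_iff hex).2 ⟨by simp [hj], fun i hi => not_not.2 (hpre i hi)⟩
  funext n
  simp only [yAct, dif_pos hex, hfind, hj, and_true]

lemma yAct_code_zero (n : ℤ) : yAct (code 0 n) = code 0 n :=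
  yAct_eq_self fun j _ => by simp [code, gray_zero_left]

lemma yAct_code_of_dvd {a b j : ℕ} {n : ℤ} (hpre : ∀ i < j, gray a i = false)
    (hj : gray a j = true) (hab : ∀ i, gray b i = gray a i ↔ i ≠ j + 1)
    (hn : 2 ^ (j + 1) ∣ n) : yAct (code a n) = code b n := by
  have hlow := (forall_binZ_eq_false_iff n (j + 1)).2 hn
  rw [yAct_eq_of_lead (j := j) (fun i hi => by simp [code, hpre i hi, hlow i (by omega)])
    (by simp [code, hj, hlow j (by omega)])]
  funext i
  by_cases hi : i = j + 1
  · subst hi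
    have hne : gray b (j + 1) ≠ gray a (j + 1) := fun h => (hab _).1 h rfl
    simp only [code, if_true]
    congr 1
    exact (Bool.eq_not_iff.2 hne).symm
  · simp [code, hi, (hab i).2 hi]

lemma yAct_code_of_not_dvd {a j : ℕ} {n : ℤ} (hpre : ∀ i < j, gray a i = false)
    (hn : ¬ 2 ^ (j + 1) ∣ n) : yAct (code a n) = code a n := by
  refine yAct_eq_self fun p hp hap => hn ((forall_binZ_eq_false_iff n (j + 1)).1 fun i hi => ?_)
  simp only [code, Prod.mk.injEq] at hp hap
  have hjp : j ≤ p := by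
    by_contra hlt
    simp [hpre p (by omega)] at hap
  rcases Nat.lt_or_ge i p with hip | hip
  · exact (hp i hip).2
  · rw [show i = p by omega]; exact hap.2

lemma code_injective : Function.Injective (fun p : ℕ × ℤ => code p.1 p.2) := fun _ _ h =>
  Prod.ext (gray_injective (funext fun i => congrArg Prod.fst (congrFun h i)))
    (binZ_injective (funext fun i => congrArg Prod.snd (congrFun h i)))

/-- Under the Gray-code/binary encoding `code : ℕ × ℤ → S^ℕ`, the transducer states
`z`, `x`, `y` act on codes exactly as the edges of the Barbieri–Sablik H-graph:
`z` sends `(m,n)` to `(m,n+1)`; `x` exchanges `(2m,n)` and `(2m+1,n)`; `y` fixes `(0,n)`,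
exchanges `(k-1,n)` and `(k,n)` for even `k ≥ 2` when `2^(v₂ k) ∣ n`, and fixes them
otherwise.  Together with the injectivity of `code`, this says that the Schreier graph of
the action of `x, y, z` on the orbit of `code (0,0)` is isomorphic to the H-graph. -/
theorem hgraph_transducer_action :
    Function.Injective (fun p : ℕ × ℤ => code p.1 p.2) ∧
    (∀ (m : ℕ) (n : ℤ), zAct (code m n) = code m (n + 1)) ∧
    (∀ (m : ℕ) (n : ℤ),
      xAct (code (2 * m) n) = code (2 * m + 1) n ∧
      xAct (code (2 * m + 1) n) = code (2 * m) n) ∧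
    (∀ n : ℤ, yAct (code 0 n) = code 0 n) ∧
    (∀ k : ℕ, 2 ≤ k → k % 2 = 0 → ∀ n : ℤ,
      (((2 : ℤ) ^ padicValNat 2 k ∣ n) →
        yAct (code (k - 1) n) = code k n ∧ yAct (code k n) = code (k - 1) n) ∧
      (¬ ((2 : ℤ) ^ padicValNat 2 k ∣ n) →
        yAct (code (k - 1) n) = code (k - 1) n ∧ yAct (code k n) = code k n)) := by
  refine ⟨code_injective, zAct_code, fun m n => ⟨xAct_code_two_mul m n,
    xAct_code_two_mul_add_one m n⟩, yAct_code_zero, fun k hk2 hke n => ?_⟩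
  obtain ⟨j, hj⟩ : ∃ j, padicValNat 2 k = j + 1 :=
    ⟨padicValNat 2 k - 1, by
      have := one_le_padicValNat_of_dvd (p := 2) (by omega) (Nat.dvd_of_mod_eq_zero hke)
      omega⟩
  have hflip (i : ℕ) : gray (k - 1) i = gray k i ↔ i ≠ j + 1 :=
    hj ▸ gray_sub_one_eq_iff (by omega) i
  have hpre_k (i : ℕ) (hi : i < j) : gray k i = false :=
    gray_eq_false_of_succ_lt_padicValNat (by omega)
  have hpre_pred (i : ℕ) (hi : i < j) : gray (k - 1) i = false :=
    ((hflip i).2 (by omega)).trans (hpre_k i hi)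
  have hlead_k : gray k j = true := gray_of_padicValNat_eq_succ hj
  have hlead_pred : gray (k - 1) j = true := ((hflip j).2 (by omega)).trans hlead_k
  rw [hj]
  exact ⟨fun hn => ⟨yAct_code_of_dvd hpre_pred hlead_pred (fun i => eq_comm.trans (hflip i)) hn,
      yAct_code_of_dvd hpre_k hlead_k hflip hn⟩,
    fun hn => ⟨yAct_code_of_not_dvd hpre_pred hn, yAct_code_of_not_dvd hpre_k hn⟩⟩
end
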